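/- Let Q be a routing matrix with Q_{ii} > 0 for all i, and assume P_{ij} > 0 for all i,j. Then the system of equations: λ_i P_{ij} ā_i = μ_{ij} f̄_{ij} for all i,j; μ_{ij} ē_{ij} = Q_{ij} Σ_k μ_{ki} f̄_{ki} for all i ≠ j; λ_i ā_i = Σ_{k≠i} μ_{ki} ē_{ki} + Q_{ii} Σ_k μ_{ki} f̄_{ki} for all i; (1 − ā_i) ē_{ii} = 0 for all i; (ē, f̄) ∈ 𝒯; and ā ∈ [0,1]^r, has at least one solution (ē, f̄, ā). -/

import Mathlib

open Finset Filter Topology MeasureTheory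

abbrev Mat (r : ℕ) := Fin r → Fin r → ℝ

/-- The network primitives: per-car arrival rates `lam`, travel rates `mu`,
and the row-stochastic destination matrix `P`. -/
structure NetParams (r : ℕ) where
  lam : Fin r → ℝ
  mu : Mat r
  P : Mat r
  lam_pos : ∀ i, 0 < lam i
  mu_pos : ∀ i j, 0 < mu i j
  P_nonneg : ∀ i j, 0 ≤ P i j
  P_rowsum : ∀ i, ∑ j, P i j = 1

/-- `q` is a routing matrix: nonnegative entries with rows summing to one. -/
def IsRouting {r : ℕ} (q : Mat r) : Prop :=
  (∀ i j, 0 ≤ q i j) ∧ ∀ i, ∑ j, q i j = 1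

/-- `(e, f)` belongs to the set 𝒯. -/
def MemT {r : ℕ} (e f : Mat r) : Prop :=
  (∀ i j, e i j ∈ Set.Icc (0:ℝ) 1) ∧ (∀ i j, f i j ∈ Set.Icc (0:ℝ) 1) ∧
    (∑ i, ∑ j, (e i j + f i j)) = 1

/-- The equilibrium system of equations (16a)–(16e) associated with the routing
matrix `Q`. -/
def EqSys {r : ℕ} (np : NetParams r) (Q ebar fbar : Mat r)
    (abar : Fin r → ℝ) : Prop :=
  (∀ i j, np.lam i * np.P i j * abar i = np.mu i j * fbar i j) ∧
  (∀ i j, i ≠ j → np.mu i j * ebar i j = Q i j * ∑ k, np.mu k i * fbar k i) ∧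
  (∀ i, np.lam i * abar i =
    (∑ k ∈ Finset.univ.filter (fun k => k ≠ i), np.mu k i * ebar k i)
      + Q i i * ∑ k, np.mu k i * fbar k i) ∧
  (∀ i, (1 - abar i) * ebar i i = 0) ∧
  MemT ebar fbar ∧
  (∀ i, 0 ≤ abar i ∧ abar i ≤ 1)

/-!
Write `b i = λ i * ā i` for the rate at which trips leave station `i`. Then (16a) determines
`f̄` from `b`, (16b) determines the off-diagonal part of `ē`, and (16c) says exactly that
`b = b P Q`, i.e. that `b` is a stationary vector of the stochastic matrix `P Q`. A nonnegative
nonzero such vector exists because the modulus of any left `1`-eigenvector of a stochastic matrix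
is subinvariant and the matrix preserves total mass. Scale `b` so that the largest `ā i` and the
total mass of the off-diagonal `ē` and of `f̄` are both at most `1`, with equality in one of them,
and park the missing mass on the diagonal entry `ē i₀ i₀` of a station `i₀` with the largest
`ā i₀`: either nothing is missing or `ā i₀ = 1`, which is (16d).
-/

open Matrix

namespace Matrix

variable {n : Type*} [Fintype n] [DecidableEq n] {M : Matrix n n ℝ}

theorem vecMul_eq_self_of_le_vecMul (hM : M ∈ rowStochastic ℝ n) {x : n → ℝ}
    (hx : x ≤ x ᵥ* M) : x ᵥ* M = x := by
  have hsum : ∑ j, x j = ∑ j, (x ᵥ* M) j := by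
    simpa only [dotProduct_one, hM.2] using dotProduct_mulVec x M 1
  exact (funext ((sum_eq_sum_iff_of_le fun j _ => hx j).1 hsum · (mem_univ _))).symm

theorem exists_nonneg_ne_zero_vecMul_eq_self [Nonempty n] (hM : M ∈ rowStochastic ℝ n) :
    ∃ x : n → ℝ, 0 ≤ x ∧ x ≠ 0 ∧ x ᵥ* M = x := by
  obtain ⟨v, hv0, hv⟩ : ∃ v ≠ 0, v ᵥ* (M - 1) = 0 := by
    rw [exists_vecMul_eq_zero_iff, ← exists_mulVec_eq_zero_iff]
    exact ⟨1, one_ne_zero, by rw [sub_mulVec, hM.2, one_mulVec, sub_self]⟩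
  rw [vecMul_sub, vecMul_one, sub_eq_zero] at hv
  refine ⟨fun i => |v i|, fun i => abs_nonneg (v i),
    fun h => hv0 (funext fun i => abs_eq_zero.1 (congrFun h i)),
    vecMul_eq_self_of_le_vecMul hM fun j => ?_⟩
  calc |v j| = |∑ i, v i * M i j| := congrArg abs (congrFun hv j).symm
    _ ≤ ∑ i, |v i * M i j| := abs_sum_le_sum_abs _ _
    _ = ∑ i, |v i| * M i j := by simp only [abs_mul, abs_of_nonneg (hM.1 _ _)]

end Matrix

theorem memT_of_nonneg {r : ℕ} {e f : Mat r} (he : ∀ i j, 0 ≤ e i j) (hf : ∀ i j, 0 ≤ f i j)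
    (hsum : ∑ i, ∑ j, (e i j + f i j) = 1) : MemT e f := by
  have hle : ∀ i j, e i j + f i j ≤ 1 := fun i j => hsum ▸
    calc e i j + f i j ≤ ∑ j', (e i j' + f i j') :=
          single_le_sum (fun j' _ => add_nonneg (he i j') (hf i j')) (mem_univ j)
      _ ≤ ∑ i', ∑ j', (e i' j' + f i' j') :=
          single_le_sum (fun i' _ => sum_nonneg fun j' _ => add_nonneg (he i' j') (hf i' j'))
            (mem_univ i)
  exact ⟨fun i j => ⟨he i j, by linarith [hle i j, hf i j]⟩,
    fun i j => ⟨hf i j, by linarith [hle i j, he i j]⟩, hsum⟩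

noncomputable section

namespace NetParams

variable {r : ℕ} (np : NetParams r) (Q : Mat r) (b : Fin r → ℝ)

/- The solution of (16a)–(16c) determined by the departure rates `b`, before normalisation;
the diagonal of `emptyFlow` (the idle cars) is left at zero. -/

def availability : Fin r → ℝ := fun i => b i / np.lam i

def fullFlow : Mat r := fun i j => b i * np.P i j / np.mu i j

def emptyFlow : Mat r := fun i j => if i = j then 0 else Q i j * (b ᵥ* of np.P) i / np.mu i j

def totalFlow : ℝ := ∑ i, ∑ j, (np.emptyFlow Q b i j + np.fullFlow b i j)

theorem P_mem_rowStochastic : of np.P ∈ rowStochastic ℝ (Fin r) :=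
  mem_rowStochastic_iff_sum.2 ⟨np.P_nonneg, np.P_rowsum⟩

variable {np Q b}

theorem availability_nonneg (hb : 0 ≤ b) (i : Fin r) : 0 ≤ np.availability b i :=
  div_nonneg (hb i) (np.lam_pos i).le

theorem fullFlow_nonneg (hb : 0 ≤ b) (i j : Fin r) : 0 ≤ np.fullFlow b i j :=
  div_nonneg (mul_nonneg (hb i) (np.P_nonneg i j)) (np.mu_pos i j).le

theorem emptyFlow_nonneg (hQ : IsRouting Q) (hb : 0 ≤ b) (i j : Fin r) :
    0 ≤ np.emptyFlow Q b i j := by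
  unfold emptyFlow
  split_ifs
  · exact le_rfl
  · exact div_nonneg (mul_nonneg (hQ.1 i j)
      (nonneg_vecMul_of_mem_rowStochastic np.P_mem_rowStochastic hb i)) (np.mu_pos i j).le

theorem lam_mul_P_mul_availability (i j : Fin r) :
    np.lam i * np.P i j * np.availability b i = np.mu i j * np.fullFlow b i j := by
  have := (np.lam_pos i).ne'
  have := (np.mu_pos i j).ne'
  simp only [availability, fullFlow]
  field_simp

theorem lam_mul_availability (i : Fin r) : np.lam i * np.availability b i = b i :=
  mul_div_cancel₀ _ (np.lam_pos i).ne'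

theorem sum_mu_mul_fullFlow (i : Fin r) :
    ∑ k, np.mu k i * np.fullFlow b k i = (b ᵥ* of np.P) i :=
  sum_congr rfl fun k _ => mul_div_cancel₀ _ (np.mu_pos k i).ne'

theorem mu_mul_emptyFlow_of_ne {i j : Fin r} (h : i ≠ j) :
    np.mu i j * np.emptyFlow Q b i j = Q i j * (b ᵥ* of np.P) i := by
  rw [emptyFlow, if_neg h, mul_div_cancel₀ _ (np.mu_pos i j).ne']

theorem lam_mul_availability_eq_inflow (hb : b ᵥ* of np.P ᵥ* of Q = b) (i : Fin r) :
    np.lam i * np.availability b i =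
      ∑ k ∈ univ.filter (fun k => k ≠ i), np.mu k i * np.emptyFlow Q b k i
        + Q i i * ∑ k, np.mu k i * np.fullFlow b k i := by
  rw [lam_mul_availability, sum_mu_mul_fullFlow,
    sum_congr rfl fun k hk => mu_mul_emptyFlow_of_ne (mem_filter.1 hk).2]
  conv_lhs => rw [← hb]
  show ∑ k, (b ᵥ* of np.P) k * Q k i = _
  rw [← sum_filter_add_sum_filter_not univ (· ≠ i)]
  simp [filter_eq', mul_comm]

theorem availability_smul (c : ℝ) : np.availability (c • b) = c • np.availability b := by
  ext i
  simp only [availability, Pi.smul_apply, smul_eq_mul, mul_div_assoc]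

theorem totalFlow_smul (c : ℝ) : np.totalFlow Q (c • b) = c * np.totalFlow Q b := by
  simp only [totalFlow, emptyFlow, fullFlow, smul_vecMul c b (of np.P), mul_sum]
  refine sum_congr rfl fun i _ => sum_congr rfl fun j _ => ?_
  split_ifs <;> simp only [Pi.smul_apply, smul_eq_mul] <;> ring

theorem eqSys_of_stationary (hQ : IsRouting Q) (hb0 : 0 ≤ b) (hb : b ᵥ* of np.P ᵥ* of Q = b)
    (i0 : Fin r) (ha : ∀ i, np.availability b i ≤ 1) (hT : np.totalFlow Q b ≤ 1)
    (htight : np.availability b i0 = 1 ∨ np.totalFlow Q b = 1) :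
    EqSys np Q
      (np.emptyFlow Q b + fun i j => if i = i0 ∧ j = i0 then 1 - np.totalFlow Q b else 0)
      (np.fullFlow b) (np.availability b) := by
  set idle : Mat r := fun i j => if i = i0 ∧ j = i0 then 1 - np.totalFlow Q b else 0
  have idle_of_ne : ∀ i j, i ≠ j → idle i j = 0 := fun i j hij =>
    if_neg fun h => hij (h.1.trans h.2.symm)
  have idle_nonneg : ∀ i j, 0 ≤ idle i j := by
    intro i j
    simp only [idle]
    split_ifs <;> linarith
  have sum_idle : ∑ i, ∑ j, idle i j = 1 - np.totalFlow Q b := by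
    simp [idle, ite_and, sum_ite_eq']
  refine ⟨lam_mul_P_mul_availability, fun i j hij => ?_, fun i => ?_, fun i => ?_,
    memT_of_nonneg (fun i j => add_nonneg (emptyFlow_nonneg hQ hb0 i j) (idle_nonneg i j))
      (fullFlow_nonneg hb0) ?_, fun i => ⟨availability_nonneg hb0 i, ha i⟩⟩
  · rw [Pi.add_apply, Pi.add_apply, idle_of_ne i j hij, add_zero, mu_mul_emptyFlow_of_ne hij,
      sum_mu_mul_fullFlow]
  · rw [lam_mul_availability_eq_inflow hb i]
    congr 1
    refine sum_congr rfl fun k hk => ?_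
    rw [Pi.add_apply, Pi.add_apply, idle_of_ne k i (mem_filter.1 hk).2, add_zero]
  · rw [Pi.add_apply, Pi.add_apply, show np.emptyFlow Q b i i = 0 from if_pos rfl, zero_add]
    by_cases hi : i = i0
    · subst hi
      rcases htight with h | h <;> simp [idle, h]
    · simp [idle, hi]
  · calc ∑ i, ∑ j, ((np.emptyFlow Q b + idle) i j + np.fullFlow b i j)
        = np.totalFlow Q b + ∑ i, ∑ j, idle i j := by
          simp only [totalFlow, Pi.add_apply, add_right_comm _ (idle _ _), sum_add_distrib]
      _ = 1 := by rw [sum_idle, add_sub_cancel]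

theorem exists_eqSys_of_stationary (hQ : IsRouting Q) (hb0 : 0 ≤ b) (hb_ne : b ≠ 0)
    (hb : b ᵥ* of np.P ᵥ* of Q = b) : ∃ ebar fbar abar, EqSys np Q ebar fbar abar := by
  obtain ⟨i, hi⟩ : ∃ i, 0 < b i := by
    obtain ⟨i, hi⟩ := Function.ne_iff.1 hb_ne
    exact ⟨i, (hb0 i).lt_of_ne' hi⟩
  have : Nonempty (Fin r) := ⟨i⟩
  obtain ⟨i0, hi0⟩ := Finite.exists_max (np.availability b)
  set N := max (np.availability b i0) (np.totalFlow Q b)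
  have hN : 0 < N := (div_pos hi (np.lam_pos i)).trans_le ((hi0 i).trans (le_max_left _ _))
  have hscale : ∀ x ≤ N, N⁻¹ * x ≤ 1 := fun x hx => inv_mul_le_one_of_le₀ hx hN.le
  refine ⟨_, _, _, eqSys_of_stationary (b := N⁻¹ • b) hQ (smul_nonneg (inv_nonneg.2 hN.le) hb0)
    (by rw [smul_vecMul N⁻¹ b (of np.P), smul_vecMul, hb]) i0 (fun j => ?_) ?_ ?_⟩
  · rw [availability_smul]
    exact hscale _ ((hi0 j).trans (le_max_left _ _))
  · rw [totalFlow_smul]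
    exact hscale _ (le_max_right _ _)
  · rw [availability_smul, totalFlow_smul, Pi.smul_apply, smul_eq_mul]
    rcases max_choice (np.availability b i0) (np.totalFlow Q b) with h | h
    · exact .inl (h ▸ inv_mul_cancel₀ hN.ne')
    · exact .inr (h ▸ inv_mul_cancel₀ hN.ne')

end NetParams

end

theorem stmt_7_general {r : ℕ} (hr : 1 ≤ r) (np : NetParams r)
    (Q : Mat r) (hQ : IsRouting Q) :
    ∃ (ebar fbar : Mat r) (abar : Fin r → ℝ), EqSys np Q ebar fbar abar := by
  have : Nonempty (Fin r) := ⟨⟨0, hr⟩⟩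
  obtain ⟨b, hb0, hb_ne, hb⟩ := exists_nonneg_ne_zero_vecMul_eq_self
    (mul_mem np.P_mem_rowStochastic (mem_rowStochastic_iff_sum.2 hQ))
  exact np.exists_eqSys_of_stationary hQ hb0 hb_ne (by rwa [vecMul_vecMul])

/-- Lemma 3 (existence part): if `P_{ij} > 0` for all `i,j` and `Q` is a routing
matrix with `Q_{ii} > 0` for all `i`, then the equilibrium system has at least
one solution. -/
theorem stmt_7 {r : ℕ} (hr : 1 ≤ r) (np : NetParams r)
    (hP : ∀ i j, 0 < np.P i j)
    (Q : Mat r) (hQ : IsRouting Q) (hQd : ∀ i, 0 < Q i i) :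
    ∃ (ebar fbar : Mat r) (abar : Fin r → ℝ), EqSys np Q ebar fbar abar :=
  stmt_7_general hr np Q hQ
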